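/- Let T and T' be nonempty rooted trees and v a leaf of T. Then the tree T ↶_v T', obtained by grafting the root of T' as a new child of v, appears with nonzero coefficient in T ⧢ T'. -/

import Mathlib

/-- Ω-decorated (planar representatives of) rooted trees. -/
inductive RTree (Ω : Type) : Type where
  | node : Ω → List (RTree Ω) → RTree Ω

/-- A rooted forest is a (finite) list of rooted trees. -/
abbrev RForest (Ω : Type) := List (RTree Ω)

/-- The free ℚ-vector space on rooted forests. -/
abbrev FV (Ω : Type) := RForest Ω →₀ ℚ

/-- Linear extension of the grafting operator `B₊^a`. -/
noncomputable def graftF {Ω : Type} (a : Ω) : FV Ω →ₗ[ℚ] FV Ω :=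
  Finsupp.lmapDomain ℚ ℚ (fun F => [RTree.node a F])

/-- A forest is a tree when it has at most one connected component
(the empty forest is the empty tree). -/
def IsTree {Ω : Type} (F : RForest Ω) : Prop := F.length ≤ 1

/-- Linear map reinserting a shuffled tree at position `i` of `F`, together with
the remaining trees of `F` and of `F'` (with the `j`-th removed). -/
noncomputable def embedF {Ω : Type} (F F' : RForest Ω) (i j : ℕ) : FV Ω →ₗ[ℚ] FV Ω :=
  Finsupp.lmapDomain ℚ ℚ (fun G => F.take i ++ G ++ F.drop (i + 1) ++ F'.eraseIdx j)

/-- Graft the forest `g` as additional children at the vertex of the tree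
reached by the given path. -/
def graftAtF {Ω : Type} (g : RForest Ω) : RTree Ω → List ℕ → RTree Ω
  | RTree.node a ts, [] => RTree.node a (ts ++ g)
  | RTree.node a ts, i :: p =>
      RTree.node a (ts.mapIdx fun j s => if j = i then graftAtF g s p else s)

/-- `IsLeafPath t p` means that `p` is the address of a leaf of `t`. -/
inductive IsLeafPath {Ω : Type} : RTree Ω → List ℕ → Prop where
  | nil (a : Ω) : IsLeafPath (RTree.node a []) []
  | cons (a : Ω) (ts : List (RTree Ω)) (i : ℕ) (p : List ℕ) (h : i < ts.length) :
      IsLeafPath (ts.get ⟨i, h⟩) p → IsLeafPath (RTree.node a ts) (i :: p)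

/-! ### Auxiliary material -/

mutual
def sizeT {Ω : Type} : RTree Ω → ℕ
  | .node _ ts => sizeF ts + 1
def sizeF {Ω : Type} : List (RTree Ω) → ℕ
  | [] => 0
  | t :: ts => sizeT t + sizeF ts
end

lemma one_le_sizeT {Ω : Type} (t : RTree Ω) : 1 ≤ sizeT t := by
  cases t with | node a ts => simp [sizeT]

lemma sizeF_singleton {Ω : Type} (t : RTree Ω) : sizeF [t] = sizeT t := by
  simp [sizeF]

lemma sizeF_eraseIdx {Ω : Type} (F : RForest Ω) (i : ℕ) (h : i < F.length) :
    sizeF F = sizeT (F.get ⟨i, h⟩) + sizeF (F.eraseIdx i) := by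
  induction F generalizing i with
  | nil => simp at h
  | cons t ts ih =>
    cases i with
    | zero => simp [sizeF]
    | succ i =>
      simp only [List.length_cons] at h
      simp only [List.get, List.eraseIdx, sizeF, ih i (by omega)]
      ring

lemma one_le_sizeF {Ω : Type} (F : RForest Ω) (h : F ≠ []) : 1 ≤ sizeF F := by
  cases F with
  | nil => simp at h
  | cons t ts => have := one_le_sizeT t; simp [sizeF]; omega

lemma sizeT_get_le {Ω : Type} (F : RForest Ω) (i : ℕ) (h : i < F.length) :
    sizeT (F.get ⟨i, h⟩) ≤ sizeF F := by
  rw [sizeF_eraseIdx F i h]; omega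

lemma sizeT_get_lt {Ω : Type} (F : RForest Ω) (i : ℕ) (h : i < F.length)
    (h2 : 2 ≤ F.length) : sizeT (F.get ⟨i, h⟩) < sizeF F := by
  rw [sizeF_eraseIdx F i h]
  have h1 : F.eraseIdx i ≠ [] := by
    have := List.length_eraseIdx_of_lt (l := F) (i := i) h
    intro hc; rw [hc] at this; simp at this; omega
  have := one_le_sizeF _ h1
  omega

lemma mapIdx_ite_eq {Ω : Type} (ts : List (RTree Ω)) (i : ℕ) (h : i < ts.length)
    (f : RTree Ω → RTree Ω) :
    (ts.mapIdx fun j s => if j = i then f s else s) =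
      ts.take i ++ f (ts.get ⟨i, h⟩) :: ts.drop (i + 1) := by
  apply List.ext_getElem
  · simp only [List.length_mapIdx, List.length_append, List.length_take,
      List.length_cons, List.length_drop]
    omega
  · intro n h1 h2
    rw [List.getElem_mapIdx, List.getElem_append]
    simp only [List.length_mapIdx] at h1
    simp only [List.length_take]
    rcases eq_or_ne n i with rfl | hne
    · rw [if_pos rfl, dif_neg (by omega)]
      have : n - min n ts.length = 0 := by omega
      simp [this, List.get_eq_getElem]
    · rw [if_neg hne]
      rcases lt_or_gt_of_ne hne with hlt | hgt
      · rw [dif_pos (by omega), List.getElem_take]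
      · rw [dif_neg (by omega)]
        rw [List.getElem_cons]
        rw [dif_neg (by omega)]
        rw [List.getElem_drop]
        congr 1
        omega

lemma single_apply_nonneg {β : Type*} (x y : β) (c : ℚ) (hc : 0 ≤ c) :
    0 ≤ Finsupp.single x c y := by
  rcases eq_or_ne x y with rfl | h
  · rwa [Finsupp.single_eq_same]
  · rw [Finsupp.single_eq_of_ne' h]

lemma mapDomain_nonneg {α β : Type*} (f : α → β) (v : α →₀ ℚ)
    (hv : ∀ x, 0 ≤ v x) (b : β) : 0 ≤ Finsupp.mapDomain f v b := by
  rw [Finsupp.mapDomain, Finsupp.sum_apply]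
  exact Finset.sum_nonneg fun a _ => single_apply_nonneg _ _ _ (hv a)

lemma le_mapDomain {α β : Type*} (f : α → β) (v : α →₀ ℚ)
    (hv : ∀ x, 0 ≤ v x) (a : α) : v a ≤ Finsupp.mapDomain f v (f a) := by
  rw [Finsupp.mapDomain, Finsupp.sum_apply]
  by_cases h : a ∈ v.support
  · have hle := Finset.single_le_sum
      (f := fun x => Finsupp.single (f x) (v x) (f a))
      (fun x _ => single_apply_nonneg _ _ _ (hv x)) h
    simpa [Finsupp.single_eq_same, Finsupp.sum] using hle
  · rw [Finsupp.notMem_support_iff.mp h]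
    exact Finset.sum_nonneg fun x _ => single_apply_nonneg _ _ _ (hv x)

/-- All coefficients of the shuffle product are nonnegative. -/
lemma sh_nonneg {Ω : Type}
    (sh : RForest Ω → RForest Ω → FV Ω)
    (h0l : ∀ F, sh [] F = Finsupp.single F 1)
    (h0r : ∀ F, sh F [] = Finsupp.single F 1)
    (htree : ∀ (a a' : Ω) (f f' : RForest Ω),
      sh [RTree.node a f] [RTree.node a' f'] =
        graftF a (sh f [RTree.node a' f']) + graftF a' (sh [RTree.node a f] f'))
    (hforest : ∀ F F' : RForest Ω, F ≠ [] → F' ≠ [] → 3 ≤ F.length + F'.length →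
      sh F F' = ((F.length * F'.length : ℚ))⁻¹ •
        ∑ i : Fin F.length, ∑ j : Fin F'.length,
          embedF F F' i j (sh [F.get i] [F'.get j])) :
    ∀ F F' G, 0 ≤ sh F F' G := by
  suffices H : ∀ n (F F' : RForest Ω), sizeF F + sizeF F' ≤ n → ∀ G, 0 ≤ sh F F' G by
    exact fun F F' G => H _ F F' le_rfl G
  intro n
  induction n with
  | zero =>
    intro F F' hn G
    cases F with
    | nil => rw [h0l]; exact single_apply_nonneg _ _ _ zero_le_one
    | cons t F₀ =>
      exfalso
      have h1 := one_le_sizeT t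
      simp [sizeF] at hn; omega
  | succ n ih =>
    intro F F' hn G
    cases F with
    | nil => rw [h0l]; exact single_apply_nonneg _ _ _ zero_le_one
    | cons t F₀ =>
    cases F' with
    | nil => rw [h0r]; exact single_apply_nonneg _ _ _ zero_le_one
    | cons t' F₀' =>
    by_cases hc : F₀ = [] ∧ F₀' = []
    · obtain ⟨rfl, rfl⟩ := hc
      obtain ⟨a, f⟩ := t
      obtain ⟨a', f'⟩ := t'
      rw [htree, Finsupp.add_apply]
      have h1 : sizeF f + sizeF [RTree.node a' f'] ≤ n := by
        simp only [sizeF_singleton, sizeT, sizeF] at hn ⊢; omega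
      have h2 : sizeF [RTree.node a f] + sizeF f' ≤ n := by
        simp only [sizeF_singleton, sizeT, sizeF] at hn ⊢; omega
      refine add_nonneg ?_ ?_
      · simp only [graftF, Finsupp.lmapDomain_apply]
        exact mapDomain_nonneg _ _ (fun x => ih _ _ h1 x) _
      · simp only [graftF, Finsupp.lmapDomain_apply]
        exact mapDomain_nonneg _ _ (fun x => ih _ _ h2 x) _
    · have hne : F₀ ≠ [] ∨ F₀' ≠ [] := by tauto
      have hlen : 3 ≤ (t :: F₀).length + (t' :: F₀').length := by
        rcases hne with h | h
        · have := List.length_pos_iff.mpr h; simp only [List.length_cons]; omega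
        · have := List.length_pos_iff.mpr h; simp only [List.length_cons]; omega
      rw [hforest _ _ (by simp) (by simp) hlen, Finsupp.smul_apply]
      refine smul_nonneg (inv_nonneg.mpr (by positivity)) ?_
      rw [Finsupp.finset_sum_apply]
      refine Finset.sum_nonneg fun i _ => ?_
      rw [Finsupp.finset_sum_apply]
      refine Finset.sum_nonneg fun j _ => ?_
      simp only [embedF, Finsupp.lmapDomain_apply]
      refine mapDomain_nonneg _ _ (fun x => ih _ _ ?_ x) _
      have hi : sizeT ((t :: F₀).get i) ≤ sizeF (t :: F₀) := sizeT_get_le _ i.1 i.2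
      have hj : sizeT ((t' :: F₀').get j) ≤ sizeF (t' :: F₀') := sizeT_get_le _ j.1 j.2
      simp only [sizeF_singleton]
      rcases hne with h | h
      · have hi' : sizeT ((t :: F₀).get i) < sizeF (t :: F₀) :=
          sizeT_get_lt _ i.1 i.2 (by have := List.length_pos_iff.mpr h; simp only [List.length_cons]; omega)
        omega
      · have hj' : sizeT ((t' :: F₀').get j) < sizeF (t' :: F₀') :=
          sizeT_get_lt _ j.1 j.2 (by have := List.length_pos_iff.mpr h; simp only [List.length_cons]; omega)
        omega

lemma sh_pos {Ω : Type}
    (sh : RForest Ω → RForest Ω → FV Ω)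
    (h0l : ∀ F, sh [] F = Finsupp.single F 1)
    (h0r : ∀ F, sh F [] = Finsupp.single F 1)
    (htree : ∀ (a a' : Ω) (f f' : RForest Ω),
      sh [RTree.node a f] [RTree.node a' f'] =
        graftF a (sh f [RTree.node a' f']) + graftF a' (sh [RTree.node a f] f'))
    (hforest : ∀ F F' : RForest Ω, F ≠ [] → F' ≠ [] → 3 ≤ F.length + F'.length →
      sh F F' = ((F.length * F'.length : ℚ))⁻¹ •
        ∑ i : Fin F.length, ∑ j : Fin F'.length,
          embedF F F' i j (sh [F.get i] [F'.get j])) :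
    ∀ (T T' : RTree Ω) (p : List ℕ), IsLeafPath T p →
      0 < (sh [T] [T']) [graftAtF [T'] T p] := by
  intro T T' p hp
  have hnn := sh_nonneg sh h0l h0r htree hforest
  obtain ⟨a', f'⟩ := T'
  set T' := RTree.node a' f' with hT'
  induction hp with
  | nil a =>
    rw [show graftAtF [T'] (RTree.node a []) [] = RTree.node a [T'] from rfl]
    rw [hT', htree, Finsupp.add_apply, h0l]
    have h1 : (graftF a (Finsupp.single [RTree.node a' f'] 1))
        [RTree.node a [RTree.node a' f']] = 1 := by
      simp only [graftF, Finsupp.lmapDomain_apply, Finsupp.mapDomain_single,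
        Finsupp.single_eq_same]
    rw [h1]
    have h2 : 0 ≤ (graftF a' (sh [RTree.node a []] f'))
        [RTree.node a [RTree.node a' f']] := by
      simp only [graftF, Finsupp.lmapDomain_apply]
      exact mapDomain_nonneg _ _ (fun x => hnn _ _ x) _
    linarith
  | cons a ts i p h hsub ihsub =>
    rw [show graftAtF [T'] (RTree.node a ts) (i :: p) =
      RTree.node a (ts.mapIdx fun j s => if j = i then graftAtF [T'] s p else s) from rfl]
    rw [mapIdx_ite_eq ts i h]
    set g : RTree Ω := graftAtF [T'] (ts.get ⟨i, h⟩) p with hg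
    set X : RForest Ω := ts.take i ++ g :: ts.drop (i + 1) with hX
    rw [hT', htree, Finsupp.add_apply, ← hT']
    have hX0 : 0 < (sh ts [T']) X := by
      rcases ts with _ | ⟨t, ts₀⟩
      · simp at h
      rcases ts₀ with _ | ⟨u, ts₁⟩
      · -- singleton
        have hi0 : i = 0 := by simp at h; omega
        subst hi0
        simpa [hX] using ihsub
      · -- at least two trees
        rw [hforest (t :: u :: ts₁) [T'] (by simp) (by simp) (by simp)]
        rw [Finsupp.smul_apply, smul_eq_mul]
        apply mul_pos
        · apply inv_pos.mpr
          simp only [List.length_cons, List.length_nil]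
          push_cast
          positivity
        · rw [Finsupp.finset_sum_apply]
          apply Finset.sum_pos'
          · intro i' _
            rw [Finsupp.finset_sum_apply]
            refine Finset.sum_nonneg fun j' _ => ?_
            simp only [embedF, Finsupp.lmapDomain_apply]
            exact mapDomain_nonneg _ _ (fun x => hnn _ _ x) _
          · refine ⟨⟨i, h⟩, Finset.mem_univ _, ?_⟩
            rw [Finsupp.finset_sum_apply]
            apply Finset.sum_pos'
            · intro j' _
              simp only [embedF, Finsupp.lmapDomain_apply]
              exact mapDomain_nonneg _ _ (fun x => hnn _ _ x) _
            · refine ⟨⟨0, by norm_num⟩, Finset.mem_univ _, ?_⟩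
              simp only [embedF, Finsupp.lmapDomain_apply]
              set F : RForest Ω := t :: u :: ts₁ with hF
              have hle := le_mapDomain
                (fun G => F.take ((⟨i, h⟩ : Fin F.length) : ℕ) ++ G ++
                  F.drop (((⟨i, h⟩ : Fin F.length) : ℕ) + 1) ++ [T'].eraseIdx ((⟨0, by norm_num⟩ : Fin ([T'] : RForest Ω).length) : ℕ))
                (sh [F.get ⟨i, h⟩] [([T'] : RForest Ω).get ⟨0, by norm_num⟩])
                (fun x => hnn _ _ x) [g]
              have heq : F.take i ++ [g] ++ F.drop (i + 1) ++ ([T'] : RForest Ω).eraseIdx 0 = X := by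
                simp [hX, List.append_assoc]
              simp only [heq] at hle
              exact lt_of_lt_of_le ihsub hle
    have hge : (sh ts [T']) X ≤
        Finsupp.mapDomain (fun F => [RTree.node a F]) (sh ts [T']) [RTree.node a X] :=
      le_mapDomain _ _ (fun x => hnn _ _ x) X
    have h2 : 0 ≤ (Finsupp.mapDomain (fun F => [RTree.node a' F])
        (sh [RTree.node a ts] f')) [RTree.node a X] :=
      mapDomain_nonneg _ _ (fun x => hnn _ _ x) _
    simp only [graftF, Finsupp.lmapDomain_apply]
    have := lt_of_lt_of_le hX0 hge
    linarith


/-- if `v` is a leaf of the nonempty rooted tree `T` and `T'` is a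
nonempty rooted tree, then the tree `T ↶_v T'` obtained by grafting the root of
`T'` as a new child of `v` appears with nonzero coefficient in `T ⧢ T'`. -/
theorem graft_appears_in_shuffle {Ω : Type}
    (sh : RForest Ω → RForest Ω → FV Ω)
    (h0l : ∀ F, sh [] F = Finsupp.single F 1)
    (h0r : ∀ F, sh F [] = Finsupp.single F 1)
    (htree : ∀ (a a' : Ω) (f f' : RForest Ω),
      sh [RTree.node a f] [RTree.node a' f'] =
        graftF a (sh f [RTree.node a' f']) + graftF a' (sh [RTree.node a f] f'))
    (hforest : ∀ F F' : RForest Ω, F ≠ [] → F' ≠ [] → 3 ≤ F.length + F'.length →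
      sh F F' = ((F.length * F'.length : ℚ))⁻¹ •
        ∑ i : Fin F.length, ∑ j : Fin F'.length,
          embedF F F' i j (sh [F.get i] [F'.get j])) :
    ∀ (T T' : RTree Ω) (p : List ℕ), IsLeafPath T p →
      (sh [T] [T']) [graftAtF [T'] T p] ≠ 0 := by
  exact fun T T' p hp => ne_of_gt (sh_pos sh h0l h0r htree hforest T T' p hp)
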